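/- Bounding construction, deadlocked case: Let U_1 and U_2 be TA templates with conjunctive guards, and let x be a deadlocked timed computation of (U_1,U_2)^{(1,n)} with n ≥ 2|U_2|+1. Then there exists a deadlocked timed computation y of (U_1,U_2)^{(1, 2|U_2|+1)} such that y(1,1) = x(1,1) and y(2,1) = x(2,1): it suffices to copy, besides x(1,1) and x(2,1), at most 2|U_2| local computations of instances of U_2 from x (one for each state of U_2 that blocks some instance in the final configuration, together with the instances they mutually block) and let all remaining instances of U_2 follow idle local computations. -/

import Mathlib

open scoped ENNReal NNReal

namespace PNTA

/-! ### Basic ingredients: comparisons and clock constraints -/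

/-- Comparison operators `<, ≤, >, ≥, =`. -/
inductive Cmp : Type
  | lt | le | gt | ge | eq

/-- Evaluation of a comparison operator on nonnegative reals. -/
def Cmp.eval : Cmp → NNReal → NNReal → Prop
  | .lt, a, b => a < b
  | .le, a, b => a ≤ b
  | .gt, a, b => b < a
  | .ge, a, b => b ≤ a
  | .eq, a, b => a = b

/-- Clock constraints `TC(C)`: Boolean combinations of comparisons of clocks with
clocks or with nonnegative rational constants. -/
inductive ClockConstraint (C : Type) : Type
  | tt
  | neg (g : ClockConstraint C)
  | disj (g₁ g₂ : ClockConstraint C)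
  | cmpClock (op : Cmp) (c₁ c₂ : C)
  | cmpConst (op : Cmp) (c : C) (q : ℚ≥0)

/-- Satisfaction of a clock constraint by a clock valuation. -/
def ClockConstraint.sat {C : Type} (u : C → NNReal) : ClockConstraint C → Prop
  | .tt => True
  | .neg g => ¬ g.sat u
  | .disj g₁ g₂ => g₁.sat u ∨ g₂.sat u
  | .cmpClock op c₁ c₂ => op.eval (u c₁) (u c₂)
  | .cmpConst op c q => op.eval (u c) (q : NNReal)

/-! ### Parameterized networks of timed automata with conjunctive guards -/

/-- A parameterized network of `k` timed automaton templates
`U_l = ⟨S_l, ŝ_l, C_l, Γ_l, τ_l, I_l⟩` with **conjunctive guards**.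
A conjunctive guard assigns to every template `h` a set of states of `U_h`
(the disjunction `ŝ_h ∨ s_h¹ ∨ ⋯`), which must contain the initial state `ŝ_h`;
it is satisfied by a global state when every *other* instance of every template `h`
is in a state belonging to the corresponding set. -/
structure ConjPNTA (k : ℕ) : Type 1 where
  /-- states of each template -/
  State : Fin k → Type
  stateFintype : ∀ l, Fintype (State l)
  /-- initial state of each template -/
  init : ∀ l, State l
  /-- clock variables of each template -/
  Clock : Fin k → Type
  clockFintype : ∀ l, Fintype (Clock l)
  /-- transitions `s —(g,r,γ)→ t`: source, clock constraint, reset set, conjunctive guard, target -/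
  trans : ∀ l, Set (State l × ClockConstraint (Clock l) × Set (Clock l) ×
      ((h : Fin k) → Set (State h)) × State l)
  trans_finite : ∀ l, (trans l).Finite
  /-- guards are conjunctive: every disjunct contains the initial state -/
  guards_conj : ∀ l tr, tr ∈ trans l → ∀ h, init h ∈ tr.2.2.2.1 h
  /-- state invariants -/
  inv : ∀ l, State l → ClockConstraint (Clock l)
  inv_init : ∀ l, inv l (init l) = ClockConstraint.tt

variable {k : ℕ}

/-- `|U_l|`: the number of states of template `l`. -/
def ConjPNTA.size (A : ConjPNTA k) (l : Fin k) : ℕ :=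
  @Fintype.card (A.State l) (A.stateFintype l)

lemma ConjPNTA.size_pos (A : ConjPNTA k) (l : Fin k) : 0 < A.size l :=
  @Fintype.card_pos _ (A.stateFintype l) ⟨A.init l⟩

/-- A configuration of the PNTA `(U_1,…,U_k)^{(n_1,…,n_k)}`: each instance `U_l^i`
(`l < k`, `i < n_l`) has a current state and a clock valuation satisfying the
invariant of that state. -/
structure Config (A : ConjPNTA k) (n : Fin k → ℕ) : Type where
  st : ∀ l, Fin (n l) → A.State l
  cl : ∀ l, Fin (n l) → A.Clock l → NNReal
  inv_sat : ∀ l i, (A.inv l (st l i)).sat (cl l i)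

/-- The initial configuration: every instance in its initial state, all clocks `0`. -/
def initConfig (A : ConjPNTA k) (n : Fin k → ℕ) : Config A n where
  st := fun l _ => A.init l
  cl := fun _ _ _ => 0
  inv_sat := fun l _ => by rw [A.inv_init l]; exact trivial

/-- The global state of configuration `c` satisfies the conjunctive guard `γ`
from the point of view of instance `(l, i)`: every other instance is in one of
the allowed states. -/
def guardSat {A : ConjPNTA k} {n : Fin k → ℕ} (c : Config A n) (l : Fin k) (i : Fin (n l))
    (γ : (h : Fin k) → Set (A.State h)) : Prop :=
  ∀ p : Σ h, Fin (n h), p ≠ ⟨l, i⟩ → c.st p.1 p.2 ∈ γ p.1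

/-- Delay transition `c →d c'`: all clocks of all instances advance by `d`,
states are unchanged, and all invariants hold throughout the delay. -/
def DelayStep {A : ConjPNTA k} {n : Fin k → ℕ} (d : NNReal) (c c' : Config A n) : Prop :=
  c'.st = c.st ∧
  (∀ l i x, c'.cl l i x = c.cl l i x + d) ∧
  (∀ l i (d' : NNReal), d' ≤ d → (A.inv l (c.st l i)).sat fun x => c.cl l i x + d')

/-- Synchronization transition `c →γ c'`: exactly one instance `U_l^i` fires a
transition `s —(g,r,γ)→ t` of `τ_l`; its current state is `s`, its clocks satisfy `g`,
the global state satisfies the conjunctive guard `γ`, its clocks in `r` are reset to 0,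
and all other instances are unchanged. -/
def SyncStep {A : ConjPNTA k} {n : Fin k → ℕ} (c c' : Config A n) : Prop :=
  ∃ (l : Fin k) (i : Fin (n l)), ∃ tr ∈ A.trans l,
    tr.1 = c.st l i ∧
    tr.2.1.sat (c.cl l i) ∧
    guardSat c l i tr.2.2.2.1 ∧
    c'.st l i = tr.2.2.2.2 ∧
    (∀ x, (x ∈ tr.2.2.1 → c'.cl l i x = 0) ∧ (x ∉ tr.2.2.1 → c'.cl l i x = c.cl l i x)) ∧
    (∀ p : Σ h, Fin (n h), p ≠ ⟨l, i⟩ → c'.st p.1 p.2 = c.st p.1 p.2 ∧ c'.cl p.1 p.2 = c.cl p.1 p.2)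

/-- A step of a timed computation: a delay transition with positive delay
(time advances accordingly) or a synchronization transition (time unchanged). -/
def Step {A : ConjPNTA k} {n : Fin k → ℕ} (c c' : Config A n) (t t' : NNReal) : Prop :=
  (∃ d : NNReal, 0 < d ∧ DelayStep d c c' ∧ t' = t + d) ∨ (SyncStep c c' ∧ t' = t)

/-- A timed computation starting at configuration `c₀` at time `0`: a finite or
infinite sequence of configuration/time pairs (represented as a partial function
on positions with downward closed domain) whose consecutive elements are related
by delay or synchronization transitions. -/
structure TimedComp (A : ConjPNTA k) (n : Fin k → ℕ) (c₀ : Config A n) : Type where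
  seq : ℕ → Option (Config A n × NNReal)
  zero_def : seq 0 = some (c₀, 0)
  downward : ∀ v, (seq (v + 1)).isSome → (seq v).isSome
  step : ∀ v c t c' t', seq v = some (c, t) → seq (v + 1) = some (c', t') → Step c c' t t'

namespace TimedComp

variable {A : ConjPNTA k} {n : Fin k → ℕ} {c₀ : Config A n}

/-- An infinite timed computation. -/
def Infinite (x : TimedComp A n c₀) : Prop := ∀ v, (x.seq v).isSome

/-- A (not necessarily maximal) finite timed computation. -/
def Finite (x : TimedComp A n c₀) : Prop := ∃ v, x.seq v = none

/-- A deadlocked timed computation: maximal finite, i.e. all transitions are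
disabled at its final configuration. -/
def Deadlocked (x : TimedComp A n c₀) : Prop :=
  ∃ v c t, x.seq v = some (c, t) ∧ x.seq (v + 1) = none ∧
    ∀ c' : Config A n, ¬ ((∃ d : NNReal, 0 < d ∧ DelayStep d c c') ∨ SyncStep c c')

/-- The time stamp at position `v` (junk value `0` outside the domain). -/
def timeAt (x : TimedComp A n c₀) (v : ℕ) : NNReal := ((x.seq v).map Prod.snd).getD 0

end TimedComp

/-! ### s-paths (continuous-time signals induced by timed computations) -/

/-- An s-path: a continuous-time signal of configurations, together with its
(possibly infinite) length. -/
structure SPath (A : ConjPNTA k) (n : Fin k → ℕ) : Type where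
  len : ℝ≥0∞
  toFun : NNReal → Config A n

/-- The suffix `ρ⌊t` of an s-path. -/
noncomputable def SPath.suffix {A : ConjPNTA k} {n : Fin k → ℕ} (ρ : SPath A n) (t : NNReal) : SPath A n where
  len := ρ.len - (t : ℝ≥0∞)
  toFun := fun s => ρ.toFun (t + s)

/-- The timed computation `x` induces the s-path `ρ`: for every step of `x` from
`(c_v,t_v)` to `(c_{v+1},t_{v+1})` and every time `s ∈ [t_v, t_{v+1})`, `ρ(s)` has
the states of `c_v` with clocks advanced by `s - t_v`; the length of `ρ` is the
supremum of the time stamps (for an infinite computation), resp. the final time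
stamp (for a finite one, at which the final configuration persists). -/
def Induces {A : ConjPNTA k} {n : Fin k → ℕ} {c₀ : Config A n}
    (x : TimedComp A n c₀) (ρ : SPath A n) : Prop :=
  (∀ v c t c' t', x.seq v = some (c, t) → x.seq (v + 1) = some (c', t') →
    ∀ s : NNReal, t ≤ s → s < t' →
      (ρ.toFun s).st = c.st ∧ ∀ l i cx, (ρ.toFun s).cl l i cx = c.cl l i cx + (s - t)) ∧
  (x.Infinite → ρ.len = ⨆ v, (x.timeAt v : ℝ≥0∞)) ∧
  (∀ v c t, x.seq v = some (c, t) → x.seq (v + 1) = none →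
    ρ.len = (t : ℝ≥0∞) ∧ (ρ.toFun t).st = c.st ∧ ∀ l i cx, (ρ.toFun t).cl l i cx = c.cl l i cx)

/-- `tcomp(ρ)`: the set of timed computations (from `c₀`) inducing the s-path `ρ`. -/
def tcomp {A : ConjPNTA k} {n : Fin k → ℕ} (c₀ : Config A n) (ρ : SPath A n) :
    Set (TimedComp A n c₀) :=
  {x | Induces x ρ}

/-- `|ρ| = ω` : `ρ` is (induced by) an infinite timed computation from `c₀`. -/
def SPath.IsInfiniteFrom {A : ConjPNTA k} {n : Fin k → ℕ} (c₀ : Config A n) (ρ : SPath A n) : Prop :=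
  ∃ x : TimedComp A n c₀, Induces x ρ ∧ x.Infinite

/-- `|ρ| < ω` : `ρ` is induced by a finite timed computation from `c₀`. -/
def SPath.IsFiniteFrom {A : ConjPNTA k} {n : Fin k → ℕ} (c₀ : Config A n) (ρ : SPath A n) : Prop :=
  ∃ x : TimedComp A n c₀, Induces x ρ ∧ x.Finite

/-- `deadlock(ρ)` : `ρ` is induced by a deadlocked timed computation from `c₀`. -/
def SPath.IsDeadlockedFrom {A : ConjPNTA k} {n : Fin k → ℕ} (c₀ : Config A n) (ρ : SPath A n) : Prop :=
  ∃ x : TimedComp A n c₀, Induces x ρ ∧ x.Deadlocked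

/-! ### IMTL formulae and their continuous-time semantics -/

/-- IMTL path formulae over atomic propositions `α`: built from `⊤` and atoms by
Boolean operators (`∧`, `¬`) and time-constrained until `Φ U_{∼q} Ψ` with
`∼ ∈ {<,≤,>,≥,=}` and `q ∈ ℚ≥0`. -/
inductive IMTL (α : Type) : Type
  | tt
  | atom (a : α)
  | and (φ ψ : IMTL α)
  | not (φ : IMTL α)
  | untl (op : Cmp) (q : ℚ≥0) (φ ψ : IMTL α)

/-- Satisfaction of an IMTL path formula on an s-path, given a valuation of the
atomic propositions on configurations. -/
def satIMTL {A : ConjPNTA k} {n : Fin k → ℕ} {α : Type} (val : α → Config A n → Prop) :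
    IMTL α → SPath A n → Prop
  | .tt, _ => True
  | .atom a, ρ => val a (ρ.toFun 0)
  | .and φ ψ, ρ => satIMTL val φ ρ ∧ satIMTL val ψ ρ
  | .not φ, ρ => ¬ satIMTL val φ ρ
  | .untl op q φ ψ, ρ => ∃ t' : NNReal, (t' : ℝ≥0∞) ≤ ρ.len ∧ op.eval t' (q : NNReal) ∧
      satIMTL val ψ (ρ.suffix t') ∧ ∀ t : NNReal, t < t' → satIMTL val φ (ρ.suffix t)

/-- The six path quantifiers `A, A_inf, A_fin, E, E_inf, E_fin`. -/
inductive PathQ : Type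
  | A | Ainf | Afin | E | Einf | Efin

/-- `(U_1,…,U_k)^{(n_1,…,n_k)} ⊨ Q Φ` for a path quantifier `Q`: quantification over
the s-paths from the initial configuration that are infinite or deadlocked (`A`, `E`),
infinite (`A_inf`, `E_inf`), resp. finite (`A_fin`, `E_fin`). -/
def SatQ (A : ConjPNTA k) (n : Fin k → ℕ) {α : Type} (val : α → Config A n → Prop)
    (Q : PathQ) (Φ : IMTL α) : Prop :=
  match Q with
  | .A => ∀ ρ : SPath A n,
      (ρ.IsInfiniteFrom (initConfig A n) ∨ ρ.IsDeadlockedFrom (initConfig A n)) → satIMTL val Φ ρ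
  | .Ainf => ∀ ρ : SPath A n, ρ.IsInfiniteFrom (initConfig A n) → satIMTL val Φ ρ
  | .Afin => ∀ ρ : SPath A n, ρ.IsFiniteFrom (initConfig A n) → satIMTL val Φ ρ
  | .E => ∃ ρ : SPath A n,
      (ρ.IsInfiniteFrom (initConfig A n) ∨ ρ.IsDeadlockedFrom (initConfig A n)) ∧ satIMTL val Φ ρ
  | .Einf => ∃ ρ : SPath A n, ρ.IsInfiniteFrom (initConfig A n) ∧ satIMTL val Φ ρ
  | .Efin => ∃ ρ : SPath A n, ρ.IsFiniteFrom (initConfig A n) ∧ satIMTL val Φ ρ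

/-- Atomic propositions of the indexed formula `Φ(i_{l₁},…,i_{l_h})`: a quantified
slot `j < h` together with a state (= atomic proposition) of template `l_j`. -/
def Atoms (A : ConjPNTA k) {h : ℕ} (l : Fin h → Fin k) : Type :=
  Σ j : Fin h, A.State (l j)

/-- The valuation of the atoms, given an assignment `inst` of concrete instances to
the quantified slots: `p(l_j, i_{l_j})` holds iff instance `i_{l_j}` of template `l_j`
is in state `p`. -/
def atomVal (A : ConjPNTA k) (n : Fin k → ℕ) {h : ℕ} (l : Fin h → Fin k)
    (inst : ∀ j : Fin h, Fin (n (l j))) : Atoms A l → Config A n → Prop :=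
  fun a c => c.st (l a.1) (inst a.1) = a.2

/-- `(U_1,…,U_k)^{(n_1,…,n_k)} ⊨ ⋀_{i_{l₁},…,i_{l_h}} Q Φ(i_{l₁},…,i_{l_h})`. -/
def SatFormula (A : ConjPNTA k) (n : Fin k → ℕ) {h : ℕ} (l : Fin h → Fin k)
    (Q : PathQ) (Φ : IMTL (Atoms A l)) : Prop :=
  ∀ inst : ∀ j : Fin h, Fin (n (l j)), SatQ A n (atomVal A n l inst) Q Φ

/-! ### Helpers for networks of two templates -/

/-- The size function of the system `(U₁,U₂)^{(a,b)}`. -/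
def two (a b : ℕ) : Fin 2 → ℕ := fun m => if m.val = 0 then a else b

/-- The valuation interpreting the atoms of a formula `Φ(1_t)` over the *first*
instance of template `t`. -/
def valFirst (A : ConjPNTA 2) (n : Fin 2 → ℕ) (t : Fin 2) (hp : 0 < n t) :
    A.State t → Config A n → Prop :=
  fun p c => c.st t ⟨0, hp⟩ = p


/-! ### Cutoffs for two-template systems -/

/-- Cutoff for the template tracked by the formula `Φ(1₂)` (part (i)):
`2` for `E_inf`, `1` for `E_fin`, `2|U₂| + 1` for `E`. -/
def cutoffTracked (A : ConjPNTA 2) : PathQ → ℕ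
  | PathQ.Einf => 2
  | PathQ.Efin => 1
  | PathQ.E => 2 * A.size 1 + 1
  | _ => 1

/-- Cutoff for the untracked template (part (ii)):
`1` for `E_inf`, `1` for `E_fin`, `2|U₂|` for `E`. -/
def cutoffOther (A : ConjPNTA 2) : PathQ → ℕ
  | PathQ.Einf => 1
  | PathQ.Efin => 1
  | PathQ.E => 2 * A.size 1
  | _ => 1

lemma cutoffTracked_pos (A : ConjPNTA 2) (Q : PathQ) : 0 < cutoffTracked A Q := by
  have := A.size_pos 1
  cases Q <;> simp only [cutoffTracked] <;> omega

lemma cutoffOther_pos (A : ConjPNTA 2) (Q : PathQ) : 0 < cutoffOther A Q := by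
  have := A.size_pos 1
  cases Q <;> simp only [cutoffOther] <;> omega

/-! ### Stuttering, reindexings and local computations -/

/-- `y` is a *stuttering* of `x`: it is obtained from `x` by inserting, between
consecutive elements, finitely many intermediate observations of the same states
with clocks advanced by small delays `δ`, without altering the original elements.
The map `m` sends a position of `y` to the position of `x` it refines. -/
def Stuttering {A : ConjPNTA k} {n : Fin k → ℕ} {c₀ : Config A n}
    (y x : TimedComp A n c₀) : Prop :=
  ∃ m : ℕ → ℕ, Monotone m ∧ m 0 = 0 ∧
    (∀ w, (y.seq w).isSome → (x.seq (m w)).isSome) ∧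
    (∀ w, y.seq w = none → ∃ v, x.seq v = none) ∧
    (∀ v, Set.Finite {w | (y.seq w).isSome ∧ m w = v}) ∧
    (∀ v, (x.seq v).isSome → ∃ w, m w = v ∧ y.seq w = x.seq v) ∧
    (∀ w cy ty cx tx, y.seq w = some (cy, ty) → x.seq (m w) = some (cx, tx) →
      tx ≤ ty ∧ cy.st = cx.st ∧ (∀ l i cxk, cy.cl l i cxk = cx.cl l i cxk + (ty - tx)) ∧
      ∀ cx' tx', x.seq (m w + 1) = some (cx', tx') → ty ≤ tx')

/-- A reindexing of positions between a timed computation `x` and a timed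
computation `y` obtained from `x` by collapsing some steps. -/
def Reindex {A : ConjPNTA k} {n n' : Fin k → ℕ} {c₀ : Config A n} {c₀' : Config A n'}
    (x : TimedComp A n c₀) (y : TimedComp A n' c₀') (m : ℕ → ℕ) : Prop :=
  Monotone m ∧ m 0 = 0 ∧
    (∀ v, (x.seq v).isSome → (y.seq (m v)).isSome) ∧
    (∀ w, (y.seq w).isSome → ∃ v, (x.seq v).isSome ∧ m v = w)

/-- The local timed computation of instance `(l, iy)` of `y` coincides (through the
reindexing `m`) with the local timed computation of instance `(l, ix)` of `x`:
same times, same states, same clock values. -/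
def LocalMatch {A : ConjPNTA k} {n n' : Fin k → ℕ} {c₀ : Config A n} {c₀' : Config A n'}
    (x : TimedComp A n c₀) (y : TimedComp A n' c₀') (m : ℕ → ℕ)
    (l : Fin k) (ix : Fin (n l)) (iy : Fin (n' l)) : Prop :=
  ∀ v c t c' t', x.seq v = some (c, t) → y.seq (m v) = some (c', t') →
    t' = t ∧ c'.st l iy = c.st l ix ∧ c'.cl l iy = c.cl l ix

/-- Instance `(l, i)` of `y` follows the idle local computation: it stutters in the
initial state `ŝ_l` with all its clocks equal to the elapsed time. -/
def IdleLocal {A : ConjPNTA k} {n : Fin k → ℕ} {c₀ : Config A n}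
    (y : TimedComp A n c₀) (l : Fin k) (i : Fin (n l)) : Prop :=
  ∀ v c t, y.seq v = some (c, t) → c.st l i = A.init l ∧ ∀ cx, c.cl l i cx = t

/-- The local computation of instance `(l, i)` of `x` is infinite: the instance takes
infinitely many (observable) synchronization steps. -/
def LocalInfinite {A : ConjPNTA k} {n : Fin k → ℕ} {c₀ : Config A n}
    (x : TimedComp A n c₀) (l : Fin k) (i : Fin (n l)) : Prop :=
  ∀ N, ∃ v, N ≤ v ∧ ∃ c t c' t', x.seq v = some (c, t) ∧ x.seq (v + 1) = some (c', t') ∧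
    t' = t ∧ ¬ (c'.st l i = c.st l i ∧ c'.cl l i = c.cl l i)

lemma two_le_two_succ (n : ℕ) (l : Fin 2) : two 1 n l ≤ two 1 (n + 1) l := by
  unfold two; split <;> omega

lemma c2two (A : ConjPNTA 2) {c₂ : ℕ} (hc : c₂ = 2 ∨ c₂ = 2 * A.size 1 + 1) : 1 < c₂ := by
  have := A.size_pos 1
  rcases hc with h | h <;> omega

lemma c2pos (A : ConjPNTA 2) {c₂ : ℕ} (hc : c₂ = 2 ∨ c₂ = 2 * A.size 1 + 1) : 0 < c₂ :=
  Nat.lt_of_lt_of_le Nat.one_pos (Nat.le_of_lt (c2two A hc))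

lemma npos (A : ConjPNTA 2) {c₂ n : ℕ} (hc : c₂ = 2 ∨ c₂ = 2 * A.size 1 + 1) (hn : c₂ ≤ n) :
    0 < n := Nat.lt_of_lt_of_le (c2pos A hc) hn

/-! ### Auxiliary machinery for the bounding construction -/

section Aux

variable {k : ℕ} {A : ConjPNTA k} {nn : Fin k → ℕ}

lemma Config.ext' {c c' : Config A nn} (hst : c.st = c'.st) (hcl : c.cl = c'.cl) : c = c' := by
  cases c; cases c'; cases hst; cases hcl; rfl

open Classical in
/-- Update the state of one instance. -/
noncomputable def updSt (c : Config A nn) (l : Fin k) (i : Fin (nn l)) (s : A.State l) :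
    ∀ l', Fin (nn l') → A.State l' :=
  fun l' => if h : l' = l then (fun i' => if (h ▸ i' : Fin (nn l)) = i then h.symm ▸ s
    else c.st l' i') else c.st l'

open Classical in
/-- Update the clock valuation of one instance. -/
noncomputable def updCl (c : Config A nn) (l : Fin k) (i : Fin (nn l)) (u : A.Clock l → NNReal) :
    ∀ l', Fin (nn l') → A.Clock l' → NNReal :=
  fun l' => if h : l' = l then (fun i' => if (h ▸ i' : Fin (nn l)) = i then h.symm ▸ u
    else c.cl l' i') else c.cl l'

lemma updSt_self (c : Config A nn) (l : Fin k) (i : Fin (nn l)) (s : A.State l) :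
    updSt c l i s l i = s := by
  unfold updSt; rw [dif_pos rfl]; exact if_pos rfl

lemma updCl_self (c : Config A nn) (l : Fin k) (i : Fin (nn l)) (u : A.Clock l → NNReal) :
    updCl c l i u l i = u := by
  unfold updCl; rw [dif_pos rfl]; exact if_pos rfl

lemma updSt_other (c : Config A nn) (l : Fin k) (i : Fin (nn l)) (s : A.State l)
    (l' : Fin k) (i' : Fin (nn l')) (h : (⟨l', i'⟩ : Σ m, Fin (nn m)) ≠ ⟨l, i⟩) :
    updSt c l i s l' i' = c.st l' i' := by
  unfold updSt
  by_cases hl : l' = l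
  · subst hl
    rw [dif_pos rfl, if_neg]
    intro hii
    exact h (by simpa using hii)
  · rw [dif_neg hl]

lemma updCl_other (c : Config A nn) (l : Fin k) (i : Fin (nn l)) (u : A.Clock l → NNReal)
    (l' : Fin k) (i' : Fin (nn l')) (h : (⟨l', i'⟩ : Σ m, Fin (nn m)) ≠ ⟨l, i⟩) :
    updCl c l i u l' i' = c.cl l' i' := by
  unfold updCl
  by_cases hl : l' = l
  · subst hl
    rw [dif_pos rfl, if_neg]
    intro hii
    exact h (by simpa using hii)
  · rw [dif_neg hl]

open Classical in
/-- If a transition is locally enabled, its conjunctive guard holds and the target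
invariant is satisfiable after the resets, then a synchronization step exists. -/
lemma exists_syncStep (c : Config A nn) (l : Fin k) (i : Fin (nn l))
    (tr : A.State l × ClockConstraint (A.Clock l) × Set (A.Clock l) ×
      ((h : Fin k) → Set (A.State h)) × A.State l)
    (htr : tr ∈ A.trans l) (hsrc : tr.1 = c.st l i) (hg : tr.2.1.sat (c.cl l i))
    (hγ : guardSat c l i tr.2.2.2.1)
    (hinv : (A.inv l tr.2.2.2.2).sat (fun x => if x ∈ tr.2.2.1 then 0 else c.cl l i x)) :
    ∃ c', SyncStep c c' := by
  classical
  set u : A.Clock l → NNReal := fun x => if x ∈ tr.2.2.1 then 0 else c.cl l i x with hu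
  refine ⟨⟨updSt c l i tr.2.2.2.2, updCl c l i u, ?_⟩, l, i, tr, htr, hsrc, hg, hγ, ?_, ?_, ?_⟩
  · intro l' i'
    by_cases h : (⟨l', i'⟩ : Σ m, Fin (nn m)) = ⟨l, i⟩
    · obtain ⟨hl, hi⟩ := Sigma.mk.inj_iff.mp h
      subst hl
      rw [heq_iff_eq] at hi; subst hi
      rw [updSt_self, updCl_self]
      exact hinv
    · rw [updSt_other c l i _ l' i' h, updCl_other c l i _ l' i' h]
      exact c.inv_sat l' i'
  · exact updSt_self ..
  · intro x
    show (x ∈ tr.2.2.1 → updCl c l i u l i x = 0) ∧ (x ∉ tr.2.2.1 → updCl c l i u l i x = c.cl l i x)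
    rw [updCl_self]
    constructor
    · intro hx; simp [hu, hx]
    · intro hx; simp [hu, hx]
  · intro p hp
    exact ⟨updSt_other c l i _ p.1 p.2 hp, updCl_other c l i _ p.1 p.2 hp⟩

/-- If every invariant tolerates every delay up to `d`, a delay step exists. -/
lemma exists_delayStep (c : Config A nn) (d : NNReal)
    (h : ∀ l i (d' : NNReal), d' ≤ d → (A.inv l (c.st l i)).sat fun x => c.cl l i x + d') :
    ∃ c', DelayStep d c c' :=
  ⟨⟨c.st, fun l i x => c.cl l i x + d, fun l i => h l i d le_rfl⟩,
    rfl, fun _ _ _ => rfl, h⟩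

end Aux

section Emb

variable {A : ConjPNTA 2} {nN nX : ℕ}

/-- Instance embedding for two-template systems with one instance of template `0`. -/
def emb2 (g : Fin nN → Fin nX) : ∀ l : Fin 2, Fin (two 1 nN l) → Fin (two 1 nX l) :=
  fun l => match l with
  | ⟨0, _⟩ => fun j => j
  | ⟨1, _⟩ => fun j => g j

lemma emb2_inj {g : Fin nN → Fin nX} (hg : Function.Injective g) (l : Fin 2) :
    Function.Injective (emb2 g l) := by
  match l with
  | ⟨0, _⟩ => exact fun a b h => h
  | ⟨1, _⟩ => exact fun a b h => hg h

lemma emb2_sigma_ne {g : Fin nN → Fin nX} (hg : Function.Injective g)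
    (p q : Σ l : Fin 2, Fin (two 1 nN l)) (h : p ≠ q) :
    (⟨p.1, emb2 g p.1 p.2⟩ : Σ l : Fin 2, Fin (two 1 nX l)) ≠ ⟨q.1, emb2 g q.1 q.2⟩ := by
  obtain ⟨l1, j1⟩ := p; obtain ⟨l2, j2⟩ := q
  intro heq
  obtain ⟨hl, hj⟩ := Sigma.mk.inj_iff.mp heq
  dsimp at hl
  subst hl
  rw [heq_iff_eq] at hj
  dsimp at hj
  exact h (by rw [emb2_inj hg _ hj])

/-- Projection of a configuration onto the chosen instances. -/
def projCfg (A : ConjPNTA 2) (g : Fin nN → Fin nX) (c : Config A (two 1 nX)) :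
    Config A (two 1 nN) where
  st l j := c.st l (emb2 g l j)
  cl l j := c.cl l (emb2 g l j)
  inv_sat l j := c.inv_sat l (emb2 g l j)

end Emb

-- STATEMENT 17
theorem bounding_construction_deadlocked (A : ConjPNTA 2) (n : ℕ)
    (hn : 2 * A.size 1 + 1 ≤ n)
    (x : TimedComp A (two 1 n) (initConfig A (two 1 n))) (hx : x.Deadlocked) :
    ∃ (y : TimedComp A (two 1 (2 * A.size 1 + 1)) (initConfig A (two 1 (2 * A.size 1 + 1))))
      (m : ℕ → ℕ) (f : Fin (two 1 (2 * A.size 1 + 1) 1) → Option (Fin (two 1 n 1))),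
      y.Deadlocked ∧ Reindex x y m ∧
      LocalMatch x y m 0 ⟨0, Nat.one_pos⟩ ⟨0, Nat.one_pos⟩ ∧
      f ⟨0, Nat.succ_pos _⟩ = some ⟨0, Nat.lt_of_lt_of_le (Nat.succ_pos _) hn⟩ ∧
      (∀ j i, f j = some i → LocalMatch x y m 1 i j) ∧
      (∀ j, f j = none → IdleLocal y 1 j) := by
  classical
  obtain ⟨v₀, cF, tF, hv0, hnone, hblock⟩ := hx
  -- basic facts about the domain of x
  have hclaim : ∀ dlt u, (x.seq (u + dlt)).isSome → (x.seq u).isSome := by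
    intro dlt
    induction dlt with
    | zero => exact fun u h => h
    | succ d ih => exact fun u h => ih u (x.downward (u + d) h)
  have hsomele : ∀ u, u ≤ v₀ → (x.seq u).isSome := by
    intro u hu
    have := hclaim (v₀ - u) u
    rw [Nat.add_sub_cancel' hu] at this
    exact this (by rw [hv0]; rfl)
  have hnonegt : ∀ u, v₀ < u → x.seq u = none := by
    intro u hu
    by_contra hc
    have h1 : (x.seq u).isSome := by
      cases h : x.seq u with
      | none => exact absurd h hc
      | some p => rfl
    have := hclaim (u - (v₀ + 1)) (v₀ + 1)
    rw [Nat.add_sub_cancel' hu] at this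
    have := this h1
    rw [hnone] at this
    exact absurd this (by simp)
  -- delay blocker analysis
  have hdel : ∀ d : NNReal, 0 < d → ∃ p : (l : Fin 2) × Fin (two 1 n l), ∃ d', d' ≤ d ∧
      ¬ (A.inv p.1 (cF.st p.1 p.2)).sat (fun xx => cF.cl p.1 p.2 xx + d') := by
    intro d hd
    by_contra hcon
    push_neg at hcon
    obtain ⟨c', hc'⟩ := exists_delayStep cF d (fun l i d' hd' => hcon ⟨l, i⟩ d' hd')
    exact hblock c' (Or.inl ⟨d, hd, hc'⟩)
  have posd : ∀ kk : ℕ, (0:NNReal) < 1/((kk:NNReal)+1) := fun kk => by positivity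
  obtain ⟨pstar, hfib⟩ :=
    Finite.exists_infinite_fiber (fun kk : ℕ => (hdel _ (posd kk)).choose)
  have hfib' := Set.infinite_coe_iff.mp hfib
  have hpstar : ∀ d : NNReal, 0 < d → ∃ d', d' ≤ d ∧
      ¬ (A.inv pstar.1 (cF.st pstar.1 pstar.2)).sat
        (fun xx => cF.cl pstar.1 pstar.2 xx + d') := by
    intro d hd
    obtain ⟨k0, hk0⟩ : ∃ k0 : ℕ, 1/((k0:NNReal)+1) ≤ d := by
      obtain ⟨k0, hk0⟩ := exists_nat_gt (1/d)
      refine ⟨k0, ?_⟩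
      rw [div_le_iff₀ (by positivity)]
      rw [div_lt_iff₀ hd] at hk0
      calc (1:NNReal) ≤ (k0:NNReal) * d := hk0.le
      _ ≤ d * ((k0:NNReal)+1) := by rw [mul_comm]; gcongr; simp
    obtain ⟨kk, hkmem, hkgt⟩ := hfib'.exists_gt k0
    obtain ⟨d', hd'le, hfail⟩ := (hdel _ (posd kk)).choose_spec
    have hFk : (hdel _ (posd kk)).choose = pstar := hkmem
    rw [hFk] at hfail
    refine ⟨d', le_trans (le_trans hd'le ?_) hk0, hfail⟩
    apply one_div_le_one_div_of_le
    · positivity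
    · exact_mod_cast Nat.succ_le_succ hkgt.le
  have hnpos : 0 < n := by have := A.size_pos 1; omega
  -- extract the delay blocker as template-1 instance or template-0 instance
  obtain ⟨j0, hj0⟩ : ∃ j0 : Fin n,
      (∀ d : NNReal, 0 < d → ∃ d', d' ≤ d ∧
        ¬ (A.inv 1 (cF.st 1 j0)).sat (fun xx => cF.cl 1 j0 xx + d')) ∨
      (∃ i0 : Fin (two 1 n 0), ∀ d : NNReal, 0 < d → ∃ d', d' ≤ d ∧
        ¬ (A.inv 0 (cF.st 0 i0)).sat (fun xx => cF.cl 0 i0 xx + d')) := by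
    obtain ⟨⟨lv, hlv⟩, ip⟩ := pstar
    have hlv2 : lv = 0 ∨ lv = 1 := by omega
    rcases hlv2 with h | h
    · subst h
      exact ⟨⟨0, hnpos⟩, Or.inr ⟨ip, hpstar⟩⟩
    · subst h
      exact ⟨ip, Or.inl hpstar⟩
  -- the selection of blocking instances
  letI : Fintype (A.State 1) := A.stateFintype 1
  set cst : Fin n → A.State 1 := fun j => cF.st 1 j with hcst
  set aOpt : A.State 1 → Option (Fin n) := fun s =>
    if h : ∃ jj, cst jj = s then some (if cst j0 = s then j0 else h.choose) else none
    with haOpt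
  set bOpt : A.State 1 → Option (Fin n) := fun s =>
    if h : ∃ jj, cst jj = s ∧ aOpt s ≠ some jj then some h.choose else none
    with hbOpt
  have hA1 : ∀ s j, aOpt s = some j → cst j = s := by
    intro s j hj
    rw [haOpt] at hj
    dsimp only at hj
    by_cases h : ∃ jj, cst jj = s
    · rw [dif_pos h] at hj
      by_cases h2 : cst j0 = s
      · rw [if_pos h2] at hj
        cases hj; exact h2
      · rw [if_neg h2] at hj
        cases hj; exact h.choose_spec
    · rw [dif_neg h] at hj; cases hj
  have hAj0 : aOpt (cst j0) = some j0 := by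
    rw [haOpt]
    dsimp only
    rw [dif_pos ⟨j0, rfl⟩, if_pos rfl]
  have hA2 : ∀ j : Fin n, ∃ j', aOpt (cst j) = some j' := by
    intro j
    rw [haOpt]
    dsimp only
    rw [dif_pos ⟨j, rfl⟩]
    exact ⟨_, rfl⟩
  have hB1 : ∀ s j, bOpt s = some j → cst j = s ∧ aOpt s ≠ some j := by
    intro s j hj
    rw [hbOpt] at hj
    dsimp only at hj
    by_cases h : ∃ jj, cst jj = s ∧ aOpt s ≠ some jj
    · rw [dif_pos h] at hj
      cases hj; exact h.choose_spec
    · rw [dif_neg h] at hj; cases hj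
  have hP3 : ∀ jb i : Fin n, jb ≠ i → ∃ j',
      (aOpt (cst jb) = some j' ∨ bOpt (cst jb) = some j') ∧ j' ≠ i ∧ cst j' = cst jb := by
    intro jb i hne
    obtain ⟨ja, hja⟩ := hA2 jb
    by_cases hia : ja = i
    · subst hia
      have hbex : ∃ jj, cst jj = cst jb ∧ aOpt (cst jb) ≠ some jj :=
        ⟨jb, rfl, by rw [hja]; intro hc; exact hne (by cases hc; rfl)⟩
      have hbs : bOpt (cst jb) = some hbex.choose := by
        rw [hbOpt]
        dsimp only
        rw [dif_pos hbex]
      obtain ⟨hc1, hc2⟩ := hB1 _ _ hbs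
      refine ⟨hbex.choose, Or.inr hbs, ?_, hc1⟩
      intro hcc
      exact hc2 (by rw [hcc, hja])
    · exact ⟨ja, Or.inl hja, hia, hA1 _ _ hja⟩
  have hP3'' : ∀ jb : Fin n, ∃ j',
      (aOpt (cst jb) = some j' ∨ bOpt (cst jb) = some j') ∧ cst j' = cst jb := by
    intro jb
    obtain ⟨ja, hja⟩ := hA2 jb
    exact ⟨ja, Or.inl hja, hA1 _ _ hja⟩
  set Kf : Finset (Fin n) := insert ⟨0, hnpos⟩
    (Finset.univ.biUnion fun s => (aOpt s).toFinset ∪ (bOpt s).toFinset) with hKf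
  have hKcard : Kf.card ≤ 2 * A.size 1 + 1 := by
    have h1 : ∀ o : Option (Fin n), o.toFinset.card ≤ 1 := by
      intro o; cases o <;> simp
    calc Kf.card ≤ (Finset.univ.biUnion fun s =>
          (aOpt s).toFinset ∪ (bOpt s).toFinset).card + 1 := by
          rw [hKf]; exact (Finset.card_insert_le _ _).trans (by omega)
    _ ≤ (∑ s : A.State 1, ((aOpt s).toFinset ∪ (bOpt s).toFinset).card) + 1 := by
          have := Finset.card_biUnion_le (s := (Finset.univ : Finset (A.State 1)))
            (t := fun s => (aOpt s).toFinset ∪ (bOpt s).toFinset)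
          omega
    _ ≤ (∑ _s : A.State 1, 2) + 1 := by
          gcongr with s
          exact (Finset.card_union_le _ _).trans (by have := h1 (aOpt s); have := h1 (bOpt s); omega)
    _ = 2 * A.size 1 + 1 := by
          rw [Finset.sum_const, Finset.card_univ]
          show Fintype.card (A.State 1) * 2 + 1 = _
          rw [ConjPNTA.size]
          ring_nf
  obtain ⟨T, hKT, hTcard⟩ := Finset.exists_superset_card_eq hKcard (by simpa using hn)
  set e := T.orderIsoOfFin hTcard with he
  set g : Fin (2 * A.size 1 + 1) → Fin n := fun w => (e w : Fin n) with hgdef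
  have hginj : Function.Injective g := fun a b h => e.injective (Subtype.ext h)
  have hgrange : ∀ j ∈ Kf, ∃ w, g w = j := by
    intro j hj
    refine ⟨e.symm ⟨j, hKT hj⟩, ?_⟩
    rw [hgdef]
    simp
  have hj0K : j0 ∈ Kf := by
    rw [hKf]
    refine Finset.mem_insert_of_mem (Finset.mem_biUnion.mpr ⟨cst j0, Finset.mem_univ _, ?_⟩)
    rw [Finset.mem_union]
    left
    rw [hAj0]
    simp
  have h0K : (⟨0, hnpos⟩ : Fin n) ∈ Kf := Finset.mem_insert_self _ _
  have hg0 : g 0 = ⟨0, hnpos⟩ := by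
    have h0T : (⟨0, hnpos⟩ : Fin n) ∈ T := hKT h0K
    have h1 : g 0 ≤ ⟨0, hnpos⟩ := by
      have h2 : (0 : Fin (2 * A.size 1 + 1)) ≤ e.symm ⟨⟨0, hnpos⟩, h0T⟩ := by
        exact Fin.zero_le _
      have h3 := e.monotone h2
      rw [OrderIso.apply_symm_apply] at h3
      exact h3
    exact le_antisymm h1 (by simp [Fin.le_def])
  -- the projected sequence and the kept steps
  set pp : ℕ → Option (Config A (two 1 (2 * A.size 1 + 1)) × NNReal) := fun v =>
    (x.seq v).map (fun p => (projCfg A g p.1, p.2)) with hpp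
  set kept : ℕ → Prop := fun u => (x.seq (u+1)).isSome ∧ pp (u+1) ≠ pp u with hkept
  have hkept_lt : ∀ u, kept u → u < v₀ := by
    intro u hu
    by_contra hc
    push_neg at hc
    have := hnonegt (u+1) (by omega)
    rw [hkept] at hu
    rw [this] at hu
    exact absurd hu.1 (by simp)
  have hfin : (setOf kept).Finite :=
    (Set.finite_Iio v₀).subset (fun u hu => hkept_lt u hu)
  set W : ℕ := Nat.count kept v₀ with hW
  have hcardW : ∀ hf : (setOf kept).Finite, hf.toFinset.card = W := by
    intro hf
    rw [hW, Nat.count_eq_card_filter_range]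
    congr 1
    ext u
    simp only [Set.Finite.mem_toFinset, Set.mem_setOf_eq, Finset.mem_filter, Finset.mem_range]
    exact ⟨fun h => ⟨hkept_lt u h, h⟩, fun h => h.2⟩
  have hmle : ∀ u, Nat.count kept u ≤ W :=
    fun u => (Nat.count_le_card hfin u).trans_eq (hcardW hfin)
  have hnthlt : ∀ w, w < W → ∀ hf : (setOf kept).Finite, w < hf.toFinset.card :=
    fun w hw hf => by rw [hcardW hf]; exact hw
  set r : ℕ → ℕ := fun w => if w < W then Nat.nth kept w else v₀ with hr
  have hrle : ∀ w, r w ≤ v₀ := by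
    intro w
    rw [hr]
    dsimp only
    split
    · exact (hkept_lt _ (Nat.nth_mem w (hnthlt w (by assumption)))).le
    · exact le_rfl
  have hmr : ∀ w, w ≤ W → Nat.count kept (r w) = w := by
    intro w hw
    rw [hr]
    dsimp only
    rcases lt_or_eq_of_le hw with h | h
    · rw [if_pos h]
      exact Nat.count_nth (hnthlt w h)
    · subst h
      rw [if_neg (lt_irrefl _)]
  have hrkept : ∀ w, w < W → kept (r w) := by
    intro w hw
    rw [hr]
    dsimp only
    rw [if_pos hw]
    exact Nat.nth_mem w (hnthlt w hw)
  -- pp is constant between kept steps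
  have ppconst : ∀ dlt u, u + dlt ≤ v₀ → Nat.count kept u = Nat.count kept (u + dlt) →
      pp u = pp (u + dlt) := by
    intro dlt
    induction dlt with
    | zero => intro u _ _; rfl
    | succ d ih =>
      intro u hle hcnt
      rw [show u + (d+1) = u + d + 1 by omega] at hcnt hle ⊢
      have h1 : Nat.count kept u ≤ Nat.count kept (u + d) :=
        Nat.count_monotone kept (by omega)
      have h1b : Nat.count kept (u + d) ≤ Nat.count kept (u + d + 1) :=
        Nat.count_monotone kept (by omega)
      have h2 : Nat.count kept (u + d + 1) = Nat.count kept (u + d) +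
          if kept (u + d) then 1 else 0 := Nat.count_succ _ _
      have hnk : ¬ kept (u + d) := by
        intro hk
        rw [if_pos hk] at h2
        omega
      have hcnt' : Nat.count kept u = Nat.count kept (u + d) := by
        rw [if_neg hnk] at h2
        omega
      have h3 : pp (u + d + 1) = pp (u + d) := by
        have hs := hsomele (u + d + 1) (by omega)
        rw [hkept] at hnk
        dsimp only at hnk
        push_neg at hnk
        exact hnk hs
      rw [h3]
      exact ih u (by omega) hcnt'
  have pp_eq : ∀ u u', u ≤ v₀ → u' ≤ v₀ → Nat.count kept u = Nat.count kept u' →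
      pp u = pp u' := by
    intro u u' hu hu' hc
    rcases le_total u u' with h | h
    · have := ppconst (u' - u) u (by omega) (by rw [Nat.add_sub_cancel' h]; exact hc)
      rwa [Nat.add_sub_cancel' h] at this
    · have := ppconst (u - u') u' (by omega) (by rw [Nat.add_sub_cancel' h]; exact hc.symm)
      rw [Nat.add_sub_cancel' h] at this
      exact this.symm
  have hppsome : ∀ u, u ≤ v₀ → (pp u).isSome := by
    intro u hu
    have h1 := hsomele u hu
    rw [Option.isSome_iff_exists] at h1
    obtain ⟨p, hp⟩ := h1
    rw [hpp]
    dsimp only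
    rw [hp]
    rfl
  -- the bounded computation y
  refine ⟨⟨fun w => if w ≤ W then pp (r w) else none, ?_, ?_, ?_⟩,
    Nat.count kept, fun j => some (g j), ?_, ?_, ?_, ?_, ?_, ?_⟩
  · -- zero_def
    show (if 0 ≤ W then pp (r 0) else none) = _
    rw [if_pos (Nat.zero_le W)]
    have h9 : pp (r 0) = pp 0 :=
      pp_eq (r 0) 0 (hrle 0) (Nat.zero_le _) (by rw [hmr 0 (Nat.zero_le _), Nat.count_zero])
    rw [h9, hpp]
    dsimp only
    rw [x.zero_def]
    rfl
  · -- downward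
    intro w h
    by_cases hw : w + 1 ≤ W
    · rw [if_pos (by omega : w ≤ W)]
      exact hppsome _ (hrle w)
    · rw [if_neg hw] at h
      exact absurd h (by simp)
  · -- step
    intro w cc tt cc' tt' h1 h2
    by_cases hw1 : w + 1 ≤ W
    swap
    · rw [if_neg hw1] at h2; cases h2
    rw [if_pos hw1] at h2
    rw [if_pos (by omega : w ≤ W)] at h1
    have hwW : w < W := hw1
    have hkv : kept (r w) := hrkept w hwW
    have hvlt : r w < v₀ := hkept_lt _ hkv
    obtain ⟨⟨cv, tv⟩, hpv⟩ := Option.isSome_iff_exists.mp (hsomele (r w) (by omega))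
    obtain ⟨⟨cv1, tv1⟩, hpv1⟩ := Option.isSome_iff_exists.mp (hsomele (r w + 1) (by omega))
    have hcv1 : Nat.count kept (r w + 1) = w + 1 := by
      rw [Nat.count_succ, if_pos hkv, hmr w (by omega)]
    have hpp1 : pp (r (w+1)) = pp (r w + 1) :=
      pp_eq _ _ (hrle _) (by omega) (by rw [hmr (w+1) hw1, hcv1])
    rw [hpp1] at h2
    rw [hpp] at h1 h2
    dsimp only at h1 h2
    rw [hpv] at h1
    rw [hpv1] at h2
    simp only [Option.map_some] at h1 h2
    injection h1 with h1
    injection h2 with h2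
    rw [Prod.mk.injEq] at h1 h2
    obtain ⟨h1a, h1b⟩ := h1
    obtain ⟨h2a, h2b⟩ := h2
    subst h1a; subst h1b; subst h2a; subst h2b
    have hstep := x.step (r w) cv tv cv1 tv1 hpv hpv1
    rcases hstep with ⟨d, hd, ⟨hst, hcl, hinvd⟩, hteq⟩ | ⟨hsync, hteq⟩
    · left
      exact ⟨d, hd, ⟨by funext l j; exact congrFun (congrFun hst l) (emb2 g l j),
        fun l j xx => hcl l (emb2 g l j) xx,
        fun l j d' hd' => hinvd l (emb2 g l j) d' hd'⟩, hteq⟩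
    · obtain ⟨l, i, tr, htr, hsrc, hgsat, hγ, htgt, hres, hframe⟩ := hsync
      by_cases hpre : ∃ jj : Fin (two 1 (2 * A.size 1 + 1) l), emb2 g l jj = i
      · obtain ⟨j, hj⟩ := hpre
        right
        refine ⟨⟨l, j, tr, htr, ?_, ?_, ?_, ?_, ?_, ?_⟩, hteq⟩
        · show tr.1 = cv.st l (emb2 g l j); rw [hj]; exact hsrc
        · show tr.2.1.sat (cv.cl l (emb2 g l j)); rw [hj]; exact hgsat
        · intro q hq
          show cv.st q.1 (emb2 g q.1 q.2) ∈ _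
          refine hγ ⟨q.1, emb2 g q.1 q.2⟩ ?_
          have h10 := emb2_sigma_ne hginj q ⟨l, j⟩ hq
          rw [hj] at h10
          exact h10
        · show cv1.st l (emb2 g l j) = _; rw [hj]; exact htgt
        · intro xx
          show (xx ∈ _ → cv1.cl l (emb2 g l j) xx = 0) ∧
            (xx ∉ _ → cv1.cl l (emb2 g l j) xx = cv.cl l (emb2 g l j) xx)
          rw [hj]
          exact hres xx
        · intro q hq
          have hne := emb2_sigma_ne hginj q ⟨l, j⟩ hq
          rw [hj] at hne
          exact ⟨(hframe _ hne).1, (hframe _ hne).2⟩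
      · exfalso
        have hneq : ∀ (l' : Fin 2) (j' : Fin (two 1 (2 * A.size 1 + 1) l')),
            (⟨l', emb2 g l' j'⟩ : Σ m, Fin (two 1 n m)) ≠ ⟨l, i⟩ := by
          intro l' j' hc
          obtain ⟨hl, hsnd⟩ := Sigma.mk.inj_iff.mp hc
          subst hl
          rw [heq_iff_eq] at hsnd
          exact hpre ⟨j', hsnd⟩
        have hppv : pp (r w + 1) = pp (r w) := by
          rw [hpp]
          dsimp only
          rw [hpv, hpv1]
          simp only [Option.map_some]
          have hcfg : projCfg A g cv1 = projCfg A g cv := by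
            apply Config.ext'
            · funext l' j'
              exact (hframe ⟨l', emb2 g l' j'⟩ (hneq l' j')).1
            · funext l' j'
              exact (hframe ⟨l', emb2 g l' j'⟩ (hneq l' j')).2
          rw [hcfg, hteq]
        exact hkv.2 hppv
  · -- Deadlocked
    refine ⟨W, projCfg A g cF, tF, ?_, ?_, ?_⟩
    · show (if W ≤ W then pp (r W) else none) = _
      rw [if_pos le_rfl]
      have hrW : r W = v₀ := by rw [hr]; dsimp only; rw [if_neg (lt_irrefl _)]
      rw [hrW, hpp]
      dsimp only
      rw [hv0]
      rfl
    · show (if W + 1 ≤ W then pp (r (W+1)) else none) = none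
      rw [if_neg (by omega)]
    · intro c'' hcon
      rcases hcon with ⟨d, hd, hds⟩ | hsync
      · -- no delay possible
        obtain ⟨_, _, hinvs⟩ := hds
        rcases hj0 with hj0' | ⟨i0, hi0⟩
        · obtain ⟨d', hd'le, hfail⟩ := hj0' d hd
          obtain ⟨wj, hwj⟩ := hgrange j0 hj0K
          apply hfail
          have h11 := hinvs 1 wj d' hd'le
          have h12 : (projCfg A g cF).st 1 wj = cF.st 1 j0 := by
            show cF.st 1 (g wj) = _
            rw [hwj]
          have h13 : (projCfg A g cF).cl 1 wj = cF.cl 1 j0 := by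
            show cF.cl 1 (g wj) = _
            rw [hwj]
          rw [h12, h13] at h11
          exact h11
        · obtain ⟨d', hd'le, hfail⟩ := hi0 d hd
          apply hfail
          exact hinvs 0 i0 d' hd'le
      · -- no synchronization possible
        obtain ⟨l, j, tr, htr, hsrc, hgsat, hγy, htgt, hres, hfr⟩ := hsync
        have hclfun : c''.cl l j = fun xx => if xx ∈ tr.2.2.1 then 0
            else cF.cl l (emb2 g l j) xx := by
          funext xx
          by_cases hxx : xx ∈ tr.2.2.1
          · rw [if_pos hxx]; exact (hres xx).1 hxx
          · rw [if_neg hxx]; exact (hres xx).2 hxx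
        have hinvtr : (A.inv l tr.2.2.2.2).sat
            (fun xx => if xx ∈ tr.2.2.1 then 0 else cF.cl l (emb2 g l j) xx) := by
          have h4 := c''.inv_sat l j
          rw [htgt, hclfun] at h4
          exact h4
        have hguardx : ¬ guardSat cF l (emb2 g l j) tr.2.2.2.1 := by
          intro hgx
          obtain ⟨c3, hc3⟩ := exists_syncStep cF l (emb2 g l j) tr htr hsrc hgsat hgx hinvtr
          exact hblock c3 (Or.inr hc3)
        rw [guardSat] at hguardx
        push_neg at hguardx
        obtain ⟨⟨lb, ib⟩, hpne, hpnot⟩ := hguardx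
        obtain ⟨lbv, hlbv⟩ := lb
        have hlb2 : lbv = 0 ∨ lbv = 1 := by omega
        rcases hlb2 with hlb | hlb
        · subst hlb
          -- the blocker is the template-0 instance, present in y
          apply hpnot
          have hqne : (⟨⟨0, hlbv⟩, ib⟩ : Σ m, Fin (two 1 (2 * A.size 1 + 1) m)) ≠ ⟨l, j⟩ := by
            intro hc
            obtain ⟨hl, hsnd⟩ := Sigma.mk.inj_iff.mp hc
            apply hpne
            subst hl
            replace hsnd := eq_of_heq hsnd
            subst hsnd
            rfl
          exact hγy ⟨⟨0, hlbv⟩, ib⟩ hqne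
        · subst hlb
          -- the blocker is a template-1 instance: use the selected representatives
          obtain ⟨lv, hl⟩ := l
          have hl2 : lv = 0 ∨ lv = 1 := by omega
          rcases hl2 with hlv | hlv
          · subst hlv
            obtain ⟨j', hj'mem, hj'st⟩ := hP3'' ib
            have hj'K : j' ∈ Kf := by
              rw [hKf]
              refine Finset.mem_insert_of_mem (Finset.mem_biUnion.mpr
                ⟨cst ib, Finset.mem_univ _, ?_⟩)
              rw [Finset.mem_union]
              rcases hj'mem with h | h
              · left; rw [h]; simp
              · right; rw [h]; simp
            obtain ⟨wj, hwj⟩ := hgrange j' hj'K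
            have hqne : (⟨⟨1, hlbv⟩, wj⟩ : Σ m, Fin (two 1 (2 * A.size 1 + 1) m)) ≠
                ⟨⟨0, hl⟩, j⟩ := by
              intro hc
              obtain ⟨hle, _⟩ := Sigma.mk.inj_iff.mp hc
              exact absurd (congrArg Fin.val hle) (by simp)
            have h5 := hγy ⟨⟨1, hlbv⟩, wj⟩ hqne
            have h6 : cF.st 1 (g wj) ∈ tr.2.2.2.1 1 := h5
            rw [hwj] at h6
            have h7 : cF.st 1 j' = cF.st 1 ib := hj'st
            rw [h7] at h6
            exact hpnot h6
          · subst hlv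
            have hib : ib ≠ (g j : Fin n) := by
              intro hc
              apply hpne
              refine Sigma.mk.inj_iff.mpr ⟨rfl, ?_⟩
              exact heq_of_eq hc
            obtain ⟨j', hj'mem, hj'ne, hj'st⟩ := hP3 ib (g j) hib
            have hj'K : j' ∈ Kf := by
              rw [hKf]
              refine Finset.mem_insert_of_mem (Finset.mem_biUnion.mpr
                ⟨cst ib, Finset.mem_univ _, ?_⟩)
              rw [Finset.mem_union]
              rcases hj'mem with h | h
              · left; rw [h]; simp
              · right; rw [h]; simp
            obtain ⟨wj, hwj⟩ := hgrange j' hj'K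
            have hqne : (⟨⟨1, hlbv⟩, wj⟩ : Σ m, Fin (two 1 (2 * A.size 1 + 1) m)) ≠
                ⟨⟨1, hl⟩, j⟩ := by
              intro hc
              obtain ⟨_, hsnd⟩ := Sigma.mk.inj_iff.mp hc
              have : wj = j := eq_of_heq hsnd
              apply hj'ne
              rw [← hwj, this]
            have h5 := hγy ⟨⟨1, hlbv⟩, wj⟩ hqne
            have h6 : cF.st 1 (g wj) ∈ tr.2.2.2.1 1 := h5
            rw [hwj] at h6
            have h7 : cF.st 1 j' = cF.st 1 ib := hj'st
            rw [h7] at h6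
            exact hpnot h6
  · -- Reindex
    refine ⟨Nat.count_monotone kept, Nat.count_zero kept, ?_, ?_⟩
    · intro v hv
      show (if Nat.count kept v ≤ W then pp (r (Nat.count kept v)) else none).isSome
      rw [if_pos (hmle v)]
      exact hppsome _ (hrle _)
    · intro w hw
      dsimp only at hw
      by_cases hwW : w ≤ W
      swap
      · rw [if_neg hwW] at hw; exact absurd hw (by simp)
      exact ⟨r w, hsomele _ (hrle w), hmr w hwW⟩
  · -- LocalMatch for template 0
    intro v c t c' t' hxv hyv
    have hvle : v ≤ v₀ := by
      by_contra hc
      push_neg at hc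
      rw [hnonegt v hc] at hxv
      cases hxv
    dsimp only at hyv
    rw [if_pos (hmle v)] at hyv
    have h14 : pp (r (Nat.count kept v)) = pp v :=
      pp_eq _ _ (hrle _) hvle (hmr _ (hmle v))
    rw [h14, hpp] at hyv
    dsimp only at hyv
    rw [hxv] at hyv
    simp only [Option.map_some] at hyv
    injection hyv with hyv
    rw [Prod.mk.injEq] at hyv
    obtain ⟨hya, hyb⟩ := hyv
    subst hya; subst hyb
    exact ⟨rfl, rfl, rfl⟩
  · -- f maps the first tracked instance to the first instance
    show some (g ⟨0, Nat.succ_pos _⟩) = _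
    have h8 : (⟨0, Nat.succ_pos _⟩ : Fin (2 * A.size 1 + 1)) = 0 := by
      apply Fin.ext; simp
    rw [h8, hg0]
    rfl
  · -- LocalMatch for template 1
    intro j i hfi
    injection hfi with hfi
    subst hfi
    intro v c t c' t' hxv hyv
    have hvle : v ≤ v₀ := by
      by_contra hc
      push_neg at hc
      rw [hnonegt v hc] at hxv
      cases hxv
    dsimp only at hyv
    rw [if_pos (hmle v)] at hyv
    have h14 : pp (r (Nat.count kept v)) = pp v :=
      pp_eq _ _ (hrle _) hvle (hmr _ (hmle v))
    rw [h14, hpp] at hyv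
    dsimp only at hyv
    rw [hxv] at hyv
    simp only [Option.map_some] at hyv
    injection hyv with hyv
    rw [Prod.mk.injEq] at hyv
    obtain ⟨hya, hyb⟩ := hyv
    subst hya; subst hyb
    exact ⟨rfl, rfl, rfl⟩
  · -- no idle instances
    intro j hj
    exact absurd hj (by simp)

end PNTA
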